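/- For every n ≥ 2, the action of the Garside element Δ_n on V^{⊗n} restricts to a K-linear isomorphism from Rel_r^n onto Rel_l^n. -/

import Mathlib

open scoped BigOperators TensorProduct

/-- The tensor algebra `T(V)` of a vector space `V` with basis `v_0, …, v_{N-1}`:
its basis is the set of words in the letters `v_i`, and multiplication is concatenation. -/
abbrev TV (K : Type*) [Field K] (N : ℕ) : Type _ := MonoidAlgebra K (FreeMonoid (Fin N))

section Ops

variable (K : Type*) [Field K] {N : ℕ}

/-- Swap the letters at (0-based) positions `k-1` and `k` of a list. -/
def swapList {α : Type*} (l : List α) (k : ℕ) : List α :=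
  match l[k-1]?, l[k]? with
  | some a, some b => (l.set (k - 1) b).set k a
  | _, _ => l

/-- The braiding coefficient `q_{ab}` for the letters at positions `k-1`, `k`. -/
def coefAt (q : Fin N → Fin N → K) (l : List (Fin N)) (k : ℕ) : K :=
  match l[k-1]?, l[k]? with
  | some a, some b => q a b
  | _, _ => 1

/-- The action of the braid-group generator `σ_k` (paper indexing) on tensor powers of `V`:
on a word `w` of length `n` with `1 ≤ k ≤ n-1` it swaps the letters at positions `k`, `k+1`
(1-based) and multiplies by the braiding coefficient. -/
noncomputable def sigOp (q : Fin N → Fin N → K) (k : ℕ) : TV K N →ₗ[K] TV K N :=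
  (MonoidAlgebra.coeffLinearEquiv (S := K) (M := FreeMonoid (Fin N)) K).symm.toLinearMap ∘ₗ Finsupp.lsum K (fun w =>
    if 1 ≤ k ∧ k < (FreeMonoid.toList w).length then
      Finsupp.lsingle (FreeMonoid.ofList (swapList (FreeMonoid.toList w) k)) ∘ₗ
        LinearMap.lsmul K K (coefAt K q (FreeMonoid.toList w) k)
    else Finsupp.lsingle w) ∘ₗ (MonoidAlgebra.coeffLinearEquiv (S := K) (M := FreeMonoid (Fin N)) K).toLinearMap

/-- The operator attached to a word `σ_{i₁}σ_{i₂}⋯σ_{i_r}` in the braid generators. -/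
noncomputable def wordOp (q : Fin N → Fin N → K) (l : List ℕ) : Module.End K (TV K N) :=
  (l.map (sigOp K q)).prod

/-- The right differential element `T_n = 1 + σ_{n−1} + σ_{n−1}σ_{n−2} + ⋯ + σ_{n−1}⋯σ_1`
acting on `V^{⊗n}`. -/
noncomputable def TOp (q : Fin N → Fin N → K) (n : ℕ) : Module.End K (TV K N) :=
  ∑ j ∈ Finset.range n, wordOp K q ((List.range' (n - j) j).reverse)

/-- The left differential element `U_n = 1 + σ_1 + σ_1σ_2 + ⋯ + σ_1σ_2⋯σ_{n−1}`
acting on `V^{⊗n}`. -/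
noncomputable def UOp (q : Fin N → Fin N → K) (n : ℕ) : Module.End K (TV K N) :=
  ∑ j ∈ Finset.range n, wordOp K q (List.range' 1 j)

/-- The right Dynkin element `P_n = (1 − σ_{n−1}⋯σ_1)(1 − σ_{n−1}⋯σ_2)⋯(1 − σ_{n−1})`. -/
noncomputable def POp (q : Fin N → Fin N → K) (n : ℕ) : Module.End K (TV K N) :=
  ((List.range' 1 (n - 1)).map (fun j =>
    1 - wordOp K q ((List.range' j (n - j)).reverse))).prod

/-- The left Dynkin element `Q_n = (1 − σ_1⋯σ_{n−1})(1 − σ_1⋯σ_{n−2})⋯(1 − σ_1)`. -/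
noncomputable def QOp (q : Fin N → Fin N → K) (n : ℕ) : Module.End K (TV K N) :=
  (((List.range' 1 (n - 1)).reverse).map (fun m =>
    1 - wordOp K q (List.range' 1 m))).prod

/-- `T_n' = (1 − σ_{n−1}²σ_{n−2}⋯σ_1)(1 − σ_{n−1}²σ_{n−2}⋯σ_2)⋯(1 − σ_{n−1}²)`. -/
noncomputable def TpOp (q : Fin N → Fin N → K) (n : ℕ) : Module.End K (TV K N) :=
  ((List.range' 1 (n - 1)).map (fun j =>
    1 - wordOp K q ((n - 1) :: (List.range' j (n - j)).reverse))).prod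

/-- `U_n' = (1 − σ_1²σ_2⋯σ_{n−1})(1 − σ_1²σ_2⋯σ_{n−2})⋯(1 − σ_1²)`, viewed inside the
operators on `V^{⊗m}` for any `m ≥ n` (standard inclusion `σ_i ↦ σ_i`). -/
noncomputable def UpOp (q : Fin N → Fin N → K) (n : ℕ) : Module.End K (TV K N) :=
  (((List.range' 1 (n - 1)).reverse).map (fun m =>
    1 - wordOp K q (1 :: List.range' 1 m))).prod

/-- `X_{m,n} = (1 − σ_{n−1}²σ_{n−2}⋯σ_{n−m})⋯(1 − σ_{n−1}²σ_{n−2})(1 − σ_{n−1}²)`;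
one has `X_{n-1,n} = T_n'` and `X_{n-2,n} = ι_{n-1}^n(T_{n-1}')`. -/
noncomputable def XOp (q : Fin N → Fin N → K) (n m : ℕ) : Module.End K (TV K N) :=
  ((List.range' (n - m) m).map (fun j =>
    1 - wordOp K q ((n - 1) :: (List.range' j (n - j)).reverse))).prod

/-- The list of generator indices of the Garside element
`Δ_n = (σ_1⋯σ_{n−1})(σ_1⋯σ_{n−2})⋯(σ_1σ_2)σ_1`. -/
def deltaList (n : ℕ) : List ℕ :=
  (((List.range (n - 1)).reverse).map (fun j => List.range' 1 (j + 1))).flatten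

/-- The Garside element `Δ_n` acting on `V^{⊗n}`. -/
noncomputable def deltaOp (q : Fin N → Fin N → K) (n : ℕ) : Module.End K (TV K N) :=
  wordOp K q (deltaList n)

/-- The central element `θ_n = Δ_n²` acting on `V^{⊗n}`. -/
noncomputable def thetaOp (q : Fin N → Fin N → K) (n : ℕ) : Module.End K (TV K N) :=
  deltaOp K q n ^ 2

/-- The degree-`n` component `V^{⊗n}` of the tensor algebra. -/
noncomputable def deg (N n : ℕ) : Submodule K (TV K N) :=
  (Finsupp.supported K K {w : FreeMonoid (Fin N) | (FreeMonoid.toList w).length = n}).comap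
    (MonoidAlgebra.coeffLinearEquiv (S := K) (M := FreeMonoid (Fin N)) K).toLinearMap

/-- The right differential operator `∂_i^R`: on a monomial `v_{f₁}⋯v_{f_n}` it is
`Σ_{k : f_k = i} (∏_{l>k} q_{i f_l}) · v_{f₁}⋯v̂_{f_k}⋯v_{f_n}`. -/
noncomputable def rdiff (q : Fin N → Fin N → K) (i : Fin N) : TV K N →ₗ[K] TV K N :=
  (MonoidAlgebra.coeffLinearEquiv (S := K) (M := FreeMonoid (Fin N)) K).symm.toLinearMap ∘ₗ Finsupp.lsum K (fun w =>
    ∑ k ∈ Finset.range (FreeMonoid.toList w).length,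
      if (FreeMonoid.toList w)[k]? = some i then
        Finsupp.lsingle (FreeMonoid.ofList ((FreeMonoid.toList w).eraseIdx k)) ∘ₗ
          LinearMap.lsmul K K
            ((((FreeMonoid.toList w).drop (k + 1)).map (fun a => q i a)).prod)
      else 0) ∘ₗ (MonoidAlgebra.coeffLinearEquiv (S := K) (M := FreeMonoid (Fin N)) K).toLinearMap

/-- The left differential operator `∂_i^L`: on a monomial `v_{f₁}⋯v_{f_n}` it is
`Σ_{k : f_k = i} (∏_{l<k} q_{f_l i}) · v_{f₁}⋯v̂_{f_k}⋯v_{f_n}`. -/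
noncomputable def ldiff (q : Fin N → Fin N → K) (i : Fin N) : TV K N →ₗ[K] TV K N :=
  (MonoidAlgebra.coeffLinearEquiv (S := K) (M := FreeMonoid (Fin N)) K).symm.toLinearMap ∘ₗ Finsupp.lsum K (fun w =>
    ∑ k ∈ Finset.range (FreeMonoid.toList w).length,
      if (FreeMonoid.toList w)[k]? = some i then
        Finsupp.lsingle (FreeMonoid.ofList ((FreeMonoid.toList w).eraseIdx k)) ∘ₗ
          LinearMap.lsmul K K
            ((((FreeMonoid.toList w).take k).map (fun a => q a i)).prod)
      else 0) ∘ₗ (MonoidAlgebra.coeffLinearEquiv (S := K) (M := FreeMonoid (Fin N)) K).toLinearMap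

end Ops

/-- A right pre-relation of degree `n`: a nonzero `v ∈ V^{⊗n}` with `T_n v = 0` such that
`v = P_n w` for some `w` with `ι_{n-1}^n(T_{n-1}') w = X_{n-2,n} w ≠ 0`. -/
noncomputable def IsRightPreRel (K : Type*) [Field K] {N : ℕ} (q : Fin N → Fin N → K)
    (n : ℕ) (v : TV K N) : Prop :=
  v ≠ 0 ∧ v ∈ deg K N n ∧ TOp K q n v = 0 ∧
    ∃ w ∈ deg K N n, v = POp K q n w ∧ XOp K q n (n - 2) w ≠ 0

/-- A left pre-relation of degree `n`: a nonzero `v ∈ V^{⊗n}` with `U_n v = 0` such that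
`v = Q_n w` for some `w` with `U_{n-1}' w ≠ 0` (standard inclusion `B_{n-1} ⊆ B_n`). -/
noncomputable def IsLeftPreRel (K : Type*) [Field K] {N : ℕ} (q : Fin N → Fin N → K)
    (n : ℕ) (v : TV K N) : Prop :=
  v ≠ 0 ∧ v ∈ deg K N n ∧ UOp K q n v = 0 ∧
    ∃ w ∈ deg K N n, v = QOp K q n w ∧ UpOp K q (n - 1) w ≠ 0

/-- `Rel_r^n`, the span of the right pre-relations of degree `n`. -/
noncomputable def RelRn (K : Type*) [Field K] {N : ℕ} (q : Fin N → Fin N → K) (n : ℕ) :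
    Submodule K (TV K N) :=
  Submodule.span K {v : TV K N | IsRightPreRel K q n v}

/-- `Rel_l^n`, the span of the left pre-relations of degree `n`. -/
noncomputable def RelLn (K : Type*) [Field K] {N : ℕ} (q : Fin N → Fin N → K) (n : ℕ) :
    Submodule K (TV K N) :=
  Submodule.span K {v : TV K N | IsLeftPreRel K q n v}

namespace S15

variable {K : Type*} [Field K] {N : ℕ}

/-- Basis monomial attached to a word. -/
noncomputable def sm (K : Type*) [Field K] {N : ℕ} (l : List (Fin N)) : TV K N :=
  MonoidAlgebra.single (FreeMonoid.ofList l) 1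

variable (q : Fin N → Fin N → K)

/-- The "inverse" braiding matrix. -/
def qinv (q : Fin N → Fin N → K) : Fin N → Fin N → K := fun i j => (q j i)⁻¹

lemma qinv_qinv : qinv (qinv q) = q := by
  funext i j; simp [qinv]

lemma sigOp_sm (k : ℕ) (l : List (Fin N)) :
    sigOp K q k (sm K l) =
      if 1 ≤ k ∧ k < l.length then coefAt K q l k • sm K (swapList l k) else sm K l := by
  rw [sm, sigOp]
  simp only [LinearMap.coe_comp, Function.comp_apply, LinearEquiv.coe_coe,
    MonoidAlgebra.coeffLinearEquiv_apply, MonoidAlgebra.coeff_single]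
  erw [Finsupp.lsum_apply, Finsupp.sum_single_index (by split <;> simp)]
  by_cases h : 1 ≤ k ∧ k < l.length
  · rw [if_pos h, if_pos (by simpa [FreeMonoid.toList_ofList] using h)]
    simp [FreeMonoid.toList_ofList, sm, Finsupp.smul_single, MonoidAlgebra.smul_single]
  · rw [if_neg h, if_neg (by simpa [FreeMonoid.toList_ofList] using h)]
    rfl

lemma swapList_length {α : Type*} (l : List α) (k : ℕ) :
    (swapList l k).length = l.length := by
  unfold swapList
  split <;> simp

lemma exists_decomp (k : ℕ) (l : List (Fin N)) (h1 : 1 ≤ k) (h2 : k < l.length) :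
    ∃ p a b s, l = p ++ a :: b :: s ∧ p.length = k - 1 := by
  induction l generalizing k with
  | nil => simp at h2
  | cons c l ih =>
    rcases Nat.eq_or_lt_of_le h1 with h1' | hk
    · have hk1 : k = 1 := h1'.symm
      subst hk1
      cases l with
      | nil => simp at h2
      | cons b s => exact ⟨[], c, b, s, rfl, rfl⟩
    · obtain ⟨p, a, b, s, hl, hp⟩ := ih (k-1) (by omega)
        (by simp at h2 ⊢; omega)
      exact ⟨c :: p, a, b, s, by simp [hl], by simp [hp]; omega⟩

lemma swapList_decomp (p : List (Fin N)) (a b : Fin N) (s : List (Fin N)) :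
    swapList (p ++ a :: b :: s) (p.length + 1) = p ++ b :: a :: s := by
  have h1 : (p ++ a :: b :: s)[p.length]? = some a := by
    rw [List.getElem?_append_right (le_refl _)]; simp
  have h2 : (p ++ a :: b :: s)[p.length + 1]? = some b := by
    rw [List.getElem?_append_right (by omega)]; simp
  unfold swapList
  rw [Nat.add_sub_cancel, h1, h2]
  change ((p ++ a :: b :: s).set p.length b).set (p.length + 1) a = _
  rw [List.set_append_right _ _ (le_refl _), List.set_append_right _ _ (by omega)]
  simp [List.set]

lemma coefAt_decomp (p : List (Fin N)) (a b : Fin N) (s : List (Fin N)) :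
    coefAt K q (p ++ a :: b :: s) (p.length + 1) = q a b := by
  have h1 : (p ++ a :: b :: s)[p.length]? = some a := by
    rw [List.getElem?_append_right (le_refl _)]; simp
  have h2 : (p ++ a :: b :: s)[p.length + 1]? = some b := by
    rw [List.getElem?_append_right (by omega)]; simp
  unfold coefAt
  rw [Nat.add_sub_cancel, h1, h2]

lemma sigOp_sm_mid (p : List (Fin N)) (a b : Fin N) (s : List (Fin N)) :
    sigOp K q (p.length + 1) (sm K (p ++ a :: b :: s)) = q a b • sm K (p ++ b :: a :: s) := by
  rw [sigOp_sm]
  rw [if_pos ⟨Nat.le_add_left _ _, by simp⟩, coefAt_decomp, swapList_decomp]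

lemma sm_mem_deg {n : ℕ} (l : List (Fin N)) (h : l.length = n) : sm K l ∈ deg K N n := by
  rw [sm, deg, Submodule.mem_comap, Finsupp.mem_supported]
  simp only [LinearEquiv.coe_coe, MonoidAlgebra.coeffLinearEquiv_apply, MonoidAlgebra.coeff_single]
  intro w hw
  have := Finsupp.support_single_subset hw
  simp only [Finset.mem_singleton] at this
  subst this
  exact h

lemma eq_on_deg {n : ℕ} {A B : Module.End K (TV K N)}
    (h : ∀ l : List (Fin N), l.length = n → A (sm K l) = B (sm K l)) :
    ∀ v ∈ deg K N n, A v = B v := by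
  intro v hv
  change v ∈ MonoidAlgebra.supported K K _ at hv
  rw [MonoidAlgebra.supported_eq_span_single] at hv
  induction hv using Submodule.span_induction with
  | mem x hx =>
    obtain ⟨w, hw, rfl⟩ := hx
    show A (sm K (FreeMonoid.toList w)) = B (sm K (FreeMonoid.toList w))
    exact h _ hw
  | zero => simp
  | add x y _ _ hx hy => simp [map_add, hx, hy]
  | smul c x _ hx => simp [map_smul, hx]

lemma map_deg {n : ℕ} {A : Module.End K (TV K N)}
    (h : ∀ l : List (Fin N), l.length = n → A (sm K l) ∈ deg K N n) :
    ∀ v ∈ deg K N n, A v ∈ deg K N n := by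
  intro v hv
  change v ∈ MonoidAlgebra.supported K K _ at hv
  rw [MonoidAlgebra.supported_eq_span_single] at hv
  induction hv using Submodule.span_induction with
  | mem x hx =>
    obtain ⟨w, hw, rfl⟩ := hx
    show A (sm K (FreeMonoid.toList w)) ∈ deg K N n
    exact h _ hw
  | zero => simp
  | add x y _ _ hx hy => simpa [map_add] using Submodule.add_mem _ hx hy
  | smul c x _ hx => simpa [map_smul] using Submodule.smul_mem _ c hx

lemma sig_deg {n : ℕ} (k : ℕ) : ∀ v ∈ deg K N n, sigOp K q k v ∈ deg K N n := by
  apply map_deg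
  intro l hl
  rw [sigOp_sm]
  split
  · exact Submodule.smul_mem _ _ (sm_mem_deg _ (by rw [swapList_length, hl]))
  · exact sm_mem_deg _ hl

lemma wordOp_nil : wordOp K q ([] : List ℕ) = 1 := rfl

lemma wordOp_cons (i : ℕ) (L : List ℕ) :
    wordOp K q (i :: L) = (sigOp K q i : Module.End K (TV K N)) * wordOp K q L := by
  simp [wordOp]

lemma wordOp_append (l1 l2 : List ℕ) :
    wordOp K q (l1 ++ l2) = wordOp K q l1 * wordOp K q l2 := by
  simp [wordOp, List.prod_append]

lemma word_deg {n : ℕ} (L : List ℕ) : ∀ v ∈ deg K N n, wordOp K q L v ∈ deg K N n := by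
  induction L with
  | nil => intro v hv; simpa [wordOp_nil] using hv
  | cons i L ih =>
    intro v hv
    rw [wordOp_cons, Module.End.mul_apply]
    exact sig_deg q i _ (ih v hv)

lemma sig_inv_sig (hq : ∀ i j, q i j ≠ 0) (k : ℕ) :
    (sigOp K (qinv q) k : Module.End K (TV K N)) * sigOp K q k = 1 := by
  apply MonoidAlgebra.lhom_ext'
  intro w
  apply LinearMap.ext
  intro c
  simp only [LinearMap.comp_apply, MonoidAlgebra.lsingle_apply]
  have hc : MonoidAlgebra.single w c = c • sm K (FreeMonoid.toList w) := by
    simp [sm, MonoidAlgebra.smul_single]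
  rw [hc, map_smul, map_smul]
  congr 1
  show sigOp K (qinv q) k ((sigOp K q k) (sm K (FreeMonoid.toList w))) = sm K (FreeMonoid.toList w)
  set l := FreeMonoid.toList w with hldef
  by_cases h : 1 ≤ k ∧ k < l.length
  · obtain ⟨p, a, b, s, hdec, hp⟩ := exists_decomp k l h.1 h.2
    have hk : k = p.length + 1 := by omega
    rw [hdec, hk, sigOp_sm_mid, map_smul, sigOp_sm_mid]
    rw [smul_smul]
    have : q a b * qinv q b a = 1 := by
      simp only [qinv]
      exact mul_inv_cancel₀ (hq a b)
    rw [this, one_smul]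
  · rw [sigOp_sm, if_neg h, sigOp_sm, if_neg h]

lemma wordOp_rev_inv (hq : ∀ i j, q i j ≠ 0) (L : List ℕ) :
    wordOp K (qinv q) L.reverse * wordOp K q L = (1 : Module.End K (TV K N)) := by
  induction L with
  | nil => simp [wordOp_nil]
  | cons i L ih =>
    rw [List.reverse_cons, wordOp_append, wordOp_cons, wordOp_cons, wordOp_nil, mul_one]
    calc wordOp K (qinv q) L.reverse * (sigOp K (qinv q) i : Module.End K (TV K N)) *
          ((sigOp K q i : Module.End K (TV K N)) * wordOp K q L)
        = wordOp K (qinv q) L.reverse *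
            (((sigOp K (qinv q) i : Module.End K (TV K N)) * sigOp K q i) * wordOp K q L) := by
          simp [mul_assoc]
      _ = 1 := by rw [sig_inv_sig q hq i, one_mul, ih]

lemma wordOp_inv_rev (hq : ∀ i j, q i j ≠ 0) (L : List ℕ) :
    wordOp K q L * wordOp K (qinv q) L.reverse = (1 : Module.End K (TV K N)) := by
  have hq' : ∀ i j, qinv q i j ≠ 0 := fun i j => inv_ne_zero (hq j i)
  have := wordOp_rev_inv (qinv q) hq' L.reverse
  rwa [List.reverse_reverse, qinv_qinv] at this

/-- Pair-product coefficient (peeling from the front of the reversed word). -/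
noncomputable def picR (q : Fin N → Fin N → K) : List (Fin N) → K
  | [] => 1
  | a :: r => (r.map (fun c => q c a)).prod * picR q r

lemma bubble (l₁ l₂ : List (Fin N)) (a : Fin N) (t : List (Fin N)) :
    wordOp K q (List.range' (l₁.length + 1) l₂.length) (sm K (l₁ ++ l₂ ++ a :: t)) =
      (l₂.map (fun c => q c a)).prod • sm K (l₁ ++ a :: l₂ ++ t) := by
  induction l₂ generalizing l₁ with
  | nil => simp [wordOp_nil]
  | cons b r ih =>
    rw [List.length_cons, List.range'_succ, wordOp_cons, Module.End.mul_apply]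
    have e1 : l₁ ++ (b :: r) ++ a :: t = (l₁ ++ [b]) ++ r ++ a :: t := by simp
    rw [e1]
    have e2 : (l₁ ++ [b]).length + 1 = l₁.length + 1 + 1 := by simp
    have hih := ih (l₁ ++ [b])
    rw [e2] at hih
    rw [hih]
    have e3 : (l₁ ++ [b]) ++ a :: r ++ t = l₁ ++ b :: a :: (r ++ t) := by simp
    rw [e3, map_smul, sigOp_sm_mid]
    rw [smul_smul, List.map_cons, List.prod_cons, mul_comm]
    simp only [List.append_assoc, List.cons_append]

lemma deltaList_succ (n : ℕ) : deltaList (n + 1) = List.range' 1 n ++ deltaList n := by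
  cases n with
  | zero => rfl
  | succ m =>
    simp only [deltaList, Nat.add_sub_cancel, List.range_succ, List.reverse_append,
      List.reverse_cons, List.reverse_nil, List.nil_append, List.cons_append,
      List.map_cons, List.flatten_cons]

lemma delta_sm (l t : List (Fin N)) :
    deltaOp K q l.length (sm K (l ++ t)) = picR q l.reverse • sm K (l.reverse ++ t) := by
  induction l using List.reverseRecOn generalizing t with
  | nil => simp [deltaOp, deltaList, wordOp_nil, picR]
  | append_singleton l' a ih =>
    have hlen : (l' ++ [a]).length = l'.length + 1 := by simp
    rw [hlen, deltaOp, deltaList_succ, wordOp_append, Module.End.mul_apply]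
    have e1 : (l' ++ [a]) ++ t = l' ++ (a :: t) := by simp
    rw [e1, ← deltaOp, ih (a :: t), map_smul]
    have hb := bubble q [] l'.reverse a t
    simp only [List.nil_append, List.length_nil, List.length_reverse, zero_add] at hb
    rw [hb, smul_smul]
    have e2 : (l' ++ [a]).reverse = a :: l'.reverse := by simp
    rw [e2, picR, mul_comm]

lemma delta_sm' {n : ℕ} (l : List (Fin N)) (hl : l.length = n) :
    deltaOp K q n (sm K l) = picR q l.reverse • sm K l.reverse := by
  have := delta_sm q l []
  rw [hl, List.append_nil, List.append_nil] at this
  exact this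

lemma picR_swap (u : List (Fin N)) (a b : Fin N) (w : List (Fin N)) :
    q a b * picR q (u ++ a :: b :: w) = q b a * picR q (u ++ b :: a :: w) := by
  induction u with
  | nil =>
    simp only [List.nil_append, picR, List.map_cons, List.prod_cons]
    ring
  | cons c u ih =>
    rw [List.cons_append, List.cons_append, picR, picR]
    have hperm : ((u ++ a :: b :: w).map (fun d => q d c)).prod
        = ((u ++ b :: a :: w).map (fun d => q d c)).prod :=
      List.Perm.prod_eq (List.Perm.map _ (List.Perm.append_left u (List.Perm.swap b a w)))
    rw [hperm, mul_left_comm, ih, mul_left_comm]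

lemma delta_sig_sm (n k : ℕ) (hk1 : 1 ≤ k) (hk2 : k < n) (l : List (Fin N))
    (hl : l.length = n) :
    deltaOp K q n (sigOp K q k (sm K l)) = sigOp K q (n - k) (deltaOp K q n (sm K l)) := by
  obtain ⟨p, a, b, s, hdec, hp⟩ := exists_decomp k l hk1 (by omega)
  subst hdec
  have hk : k = p.length + 1 := by omega
  subst hk
  have hn : n = p.length + 2 + s.length := by
    simp at hl; omega
  rw [sigOp_sm_mid, map_smul, delta_sm' q _ (by simp at hl ⊢; omega),
    delta_sm' q _ hl]
  have e1 : (p ++ b :: a :: s).reverse = s.reverse ++ a :: b :: p.reverse := by simp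
  have e2 : (p ++ a :: b :: s).reverse = s.reverse ++ b :: a :: p.reverse := by simp
  rw [e1, e2, map_smul]
  have hnk : n - (p.length + 1) = s.reverse.length + 1 := by simp; omega
  rw [hnk, sigOp_sm_mid]
  rw [smul_smul, smul_smul]
  congr 1
  rw [picR_swap q s.reverse a b p.reverse, mul_comm]

lemma delta_sig_deg (n k : ℕ) (hk1 : 1 ≤ k) (hk2 : k < n) :
    ∀ v ∈ deg K N n,
      deltaOp K q n (sigOp K q k v) = sigOp K q (n - k) (deltaOp K q n v) := by
  apply eq_on_deg (A := deltaOp K q n * (sigOp K q k : Module.End K (TV K N)))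
    (B := (sigOp K q (n - k) : Module.End K (TV K N)) * deltaOp K q n)
  intro l hl
  simp only [Module.End.mul_apply]
  exact delta_sig_sm q n k hk1 hk2 l hl

lemma delta_word_deg (n : ℕ) (L : List ℕ) (hL : ∀ i ∈ L, 1 ≤ i ∧ i < n) :
    ∀ v ∈ deg K N n,
      deltaOp K q n (wordOp K q L v) =
        wordOp K q (L.map (fun i => n - i)) (deltaOp K q n v) := by
  induction L with
  | nil => intro v hv; simp [wordOp_nil]
  | cons i L ih =>
    intro v hv
    rw [wordOp_cons, Module.End.mul_apply, List.map_cons, wordOp_cons, Module.End.mul_apply]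
    rw [delta_sig_deg q n i (hL i (by simp)).1 (hL i (by simp)).2 _ (word_deg q L v hv)]
    rw [ih (fun j hj => hL j (by simp [hj])) v hv]

/-- Conjugation through a product of operators, elementwise. -/
lemma prod_conj (n : ℕ) (D : Module.End K (TV K N))
    (LA LB : List (Module.End K (TV K N)))
    (h : List.Forall₂ (fun A B => (∀ v ∈ deg K N n, A v ∈ deg K N n) ∧
      (∀ v ∈ deg K N n, D (A v) = B (D v))) LA LB) :
    ∀ v ∈ deg K N n, (D (LA.prod v) = LB.prod (D v)) ∧ LA.prod v ∈ deg K N n := by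
  induction h with
  | nil => intro v hv; simpa using hv
  | @cons A B LA' LB' hAB _ ih =>
    intro v hv
    obtain ⟨ih1, ih2⟩ := ih v hv
    rw [List.prod_cons, List.prod_cons, Module.End.mul_apply, Module.End.mul_apply]
    exact ⟨by rw [hAB.2 _ ih2, ih1], hAB.1 _ ih2⟩

lemma forall₂_map {α : Type*} (R : Module.End K (TV K N) → Module.End K (TV K N) → Prop)
    (l : List α) (f g : α → Module.End K (TV K N)) (h : ∀ x ∈ l, R (f x) (g x)) :
    List.Forall₂ R (l.map f) (l.map g) := by
  induction l with
  | nil => simp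
  | cons x l ih =>
    simp only [List.map_cons, List.forall₂_cons]
    exact ⟨h x (by simp), ih (fun y hy => h y (by simp [hy]))⟩

lemma mem_range'_bounds {i a m : ℕ} (h : i ∈ List.range' a m) : a ≤ i ∧ i < a + m := by
  rw [List.mem_range'] at h
  obtain ⟨j, hj, rfl⟩ := h
  omega

lemma rev_map_sub (n : ℕ) : ∀ (m a : ℕ), 1 ≤ a → a + m = n →
    ((List.range' a m).reverse).map (fun i => n - i) = List.range' 1 m := by
  intro m
  induction m with
  | zero => simp
  | succ m ih =>
    intro a ha hn
    rw [List.range'_succ, List.reverse_cons, List.map_append,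
      ih (a + 1) (by omega) (by omega), List.range'_1_concat]
    simp
    omega

lemma rev_map_eq {β : Type*} (n m a : ℕ) (h1 : 1 ≤ a) (h2 : a + m = n) (F : ℕ → β) :
    ((List.range' a m).reverse).map (fun i => F (n - i)) = (List.range' 1 m).map F := by
  rw [show (fun i => F (n - i)) = F ∘ (fun i => n - i) from rfl, ← List.map_map,
    rev_map_sub n m a h1 h2]

lemma map_conj_list {β : Type*} (n m a : ℕ) (h1 : 1 ≤ a) (h2 : a + m = n) (F : ℕ → β) :
    (List.range' a m).map (fun j => F (n - j)) = ((List.range' 1 m).reverse).map F := by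
  rw [List.map_reverse, ← rev_map_eq n m a h1 h2 F, List.map_reverse, List.reverse_reverse]

lemma delta_TOp (n : ℕ) (hn : 1 ≤ n) (v : TV K N) (hv : v ∈ deg K N n) :
    deltaOp K q n (TOp K q n v) = UOp K q n (deltaOp K q n v) := by
  rw [TOp, UOp, LinearMap.sum_apply, LinearMap.sum_apply, map_sum]
  apply Finset.sum_congr rfl
  intro j hj
  rw [Finset.mem_range] at hj
  have hL : ∀ i ∈ (List.range' (n - j) j).reverse, 1 ≤ i ∧ i < n := by
    intro i hi
    rw [List.mem_reverse] at hi
    have := mem_range'_bounds hi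
    omega
  rw [delta_word_deg q n _ hL v hv, rev_map_sub n j (n - j) (by omega) (by omega)]

lemma one_sub_deg {n : ℕ} (W : Module.End K (TV K N))
    (hW : ∀ v ∈ deg K N n, W v ∈ deg K N n) :
    ∀ v ∈ deg K N n, (1 - W) v ∈ deg K N n := by
  intro v hv
  rw [LinearMap.sub_apply, Module.End.one_apply]
  exact Submodule.sub_mem _ hv (hW v hv)

lemma conj_one_sub (n : ℕ) (L : List ℕ) (hL : ∀ i ∈ L, 1 ≤ i ∧ i < n)
    (v : TV K N) (hv : v ∈ deg K N n) :
    deltaOp K q n ((1 - wordOp K q L) v) =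
      (1 - wordOp K q (L.map (fun i => n - i))) (deltaOp K q n v) := by
  rw [LinearMap.sub_apply, LinearMap.sub_apply, Module.End.one_apply, Module.End.one_apply,
    map_sub, delta_word_deg q n L hL v hv]

lemma delta_POp (n : ℕ) (hn : 2 ≤ n) (v : TV K N) (hv : v ∈ deg K N n) :
    deltaOp K q n (POp K q n v) = QOp K q n (deltaOp K q n v) := by
  rw [POp, QOp]
  have key := prod_conj n (deltaOp K q n)
    ((List.range' 1 (n - 1)).map (fun j =>
      (1 : Module.End K (TV K N)) - wordOp K q ((List.range' j (n - j)).reverse)))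
    ((List.range' 1 (n - 1)).map (fun j =>
      (1 : Module.End K (TV K N)) - wordOp K q (List.range' 1 (n - j))))
    ?_ v hv
  · rw [key.1]
    congr 2
    exact map_conj_list n (n - 1) 1 le_rfl (by omega)
      (fun m => (1 : Module.End K (TV K N)) - wordOp K q (List.range' 1 m))
  · apply forall₂_map
    intro j hj
    have hjb := mem_range'_bounds hj
    have hL : ∀ i ∈ (List.range' j (n - j)).reverse, 1 ≤ i ∧ i < n := by
      intro i hi
      rw [List.mem_reverse] at hi
      have := mem_range'_bounds hi
      omega
    constructor
    · exact one_sub_deg _ (word_deg q _)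
    · intro w hw
      rw [conj_one_sub q n _ hL w hw, rev_map_sub n (n - j) j (by omega) (by omega)]

lemma delta_XOp (n : ℕ) (hn : 2 ≤ n) (v : TV K N) (hv : v ∈ deg K N n) :
    deltaOp K q n (XOp K q n (n - 2) v) = UpOp K q (n - 1) (deltaOp K q n v) := by
  rw [XOp, UpOp]
  have e0 : n - (n - 2) = 2 := by omega
  rw [e0]
  have key := prod_conj n (deltaOp K q n)
    ((List.range' 2 (n - 2)).map (fun j =>
      (1 : Module.End K (TV K N)) -
        wordOp K q ((n - 1) :: (List.range' j (n - j)).reverse)))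
    ((List.range' 2 (n - 2)).map (fun j =>
      (1 : Module.End K (TV K N)) - wordOp K q (1 :: List.range' 1 (n - j))))
    ?_ v hv
  · rw [key.1]
    congr 2
    have e1 : n - 1 - 1 = n - 2 := by omega
    rw [e1]
    exact map_conj_list n (n - 2) 2 (by omega) (by omega)
      (fun m => (1 : Module.End K (TV K N)) - wordOp K q (1 :: List.range' 1 m))
  · apply forall₂_map
    intro j hj
    have hjb := mem_range'_bounds hj
    have hL : ∀ i ∈ (n - 1) :: (List.range' j (n - j)).reverse, 1 ≤ i ∧ i < n := by
      intro i hi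
      rcases List.mem_cons.mp hi with h | h
      · omega
      · rw [List.mem_reverse] at h
        have := mem_range'_bounds h
        omega
    constructor
    · exact one_sub_deg _ (word_deg q _)
    · intro w hw
      rw [conj_one_sub q n _ hL w hw]
      simp only [List.map_cons]
      rw [rev_map_sub n (n - j) j (by omega) (by omega), show n - (n - 1) = 1 by omega]

/-- The inverse of the Garside element as an operator. -/
noncomputable def invDelta (q : Fin N → Fin N → K) (n : ℕ) : Module.End K (TV K N) :=
  wordOp K (qinv q) (deltaList n).reverse

lemma invDelta_delta (hq : ∀ i j, q i j ≠ 0) (n : ℕ) (v : TV K N) :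
    invDelta q n (deltaOp K q n v) = v := by
  have := wordOp_rev_inv q hq (deltaList n)
  have h2 := congrArg (fun F => F v) this
  simpa [Module.End.mul_apply, invDelta, deltaOp] using h2

lemma delta_invDelta (hq : ∀ i j, q i j ≠ 0) (n : ℕ) (v : TV K N) :
    deltaOp K q n (invDelta q n v) = v := by
  have := wordOp_inv_rev q hq (deltaList n)
  have h2 := congrArg (fun F => F v) this
  simpa [Module.End.mul_apply, invDelta, deltaOp] using h2

lemma invDelta_deg (n : ℕ) : ∀ v ∈ deg K N n, invDelta q n v ∈ deg K N n :=
  word_deg (qinv q) _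

lemma delta_deg (n : ℕ) : ∀ v ∈ deg K N n, deltaOp K q n v ∈ deg K N n :=
  word_deg q _

end S15

/-- for every `n ≥ 2`, the action of the Garside element `Δ_n` on `V^{⊗n}`
restricts to a `K`-linear isomorphism from `Rel_r^n` onto `Rel_l^n`. -/
theorem statement_15 (K : Type*) [Field K] [CharZero K] (N : ℕ) (hN : 1 ≤ N)
    (q : Fin N → Fin N → K) (hq : ∀ i j, q i j ≠ 0) (n : ℕ) (hn : 2 ≤ n) :
    Submodule.map (deltaOp K q n) (RelRn K q n) = RelLn K q n ∧
    ∀ x ∈ RelRn K q n, deltaOp K q n x = 0 → x = 0 := by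
  classical
  open S15 in
  have hDi : ∀ v, invDelta q n (deltaOp K q n v) = v := invDelta_delta q hq n
  have hiD : ∀ v, deltaOp K q n (invDelta q n v) = v := delta_invDelta q hq n
  have hinj : ∀ x : TV K N, deltaOp K q n x = 0 → x = 0 := by
    intro x h
    have := hDi x
    rw [h, map_zero] at this
    exact this.symm
  have hDdeg : ∀ v ∈ deg K N n, deltaOp K q n v ∈ deg K N n := delta_deg q n
  have hIdeg : ∀ v ∈ deg K N n, invDelta q n v ∈ deg K N n := invDelta_deg q n
  have hT : ∀ v ∈ deg K N n, deltaOp K q n (TOp K q n v) = UOp K q n (deltaOp K q n v) :=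
    fun v hv => delta_TOp q n (by omega) v hv
  have hP : ∀ v ∈ deg K N n, deltaOp K q n (POp K q n v) = QOp K q n (deltaOp K q n v) :=
    fun v hv => delta_POp q n hn v hv
  have hX : ∀ v ∈ deg K N n,
      deltaOp K q n (XOp K q n (n - 2) v) = UpOp K q (n - 1) (deltaOp K q n v) :=
    fun v hv => delta_XOp q n hn v hv
  constructor
  · rw [RelRn, RelLn, Submodule.map_span]
    congr 1
    ext u
    simp only [Set.mem_image, Set.mem_setOf_eq]
    constructor
    · rintro ⟨v, hv, rfl⟩
      obtain ⟨hv0, hvdeg, hvT, w, hwdeg, hvP, hwX⟩ := hv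
      refine ⟨fun h0 => hv0 (hinj v h0), hDdeg v hvdeg, ?_, deltaOp K q n w,
        hDdeg w hwdeg, ?_, ?_⟩
      · rw [← hT v hvdeg, hvT, map_zero]
      · rw [hvP, hP w hwdeg]
      · intro h0
        apply hwX
        apply hinj
        rw [hX w hwdeg, h0]
    · rintro ⟨hu0, hudeg, huU, w', hw'deg, huQ, hw'U⟩
      refine ⟨invDelta q n u, ?_, hiD u⟩
      have hvdeg : invDelta q n u ∈ deg K N n := hIdeg u hudeg
      have hwdeg : invDelta q n w' ∈ deg K N n := hIdeg w' hw'deg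
      refine ⟨?_, hvdeg, ?_, invDelta q n w', hwdeg, ?_, ?_⟩
      · intro h0
        apply hu0
        rw [← hiD u, h0, map_zero]
      · apply hinj
        rw [hT _ hvdeg, hiD u, huU]
      · have h1 : deltaOp K q n (POp K q n (invDelta q n w')) = deltaOp K q n (invDelta q n u) := by
          rw [hP _ hwdeg, hiD w', hiD u, huQ]
        have h2 := congrArg (invDelta q n) h1
        rw [hDi, hDi] at h2
        exact h2.symm
      · intro h0
        apply hw'U
        have h1 := hX (invDelta q n w') hwdeg
        rw [h0, map_zero, hiD w'] at h1
        exact h1.symm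
  · intro x _ h0
    exact hinj x h0
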